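/- arXiv:0911.0458 — 9 statements merged into one kernel-verified Lean document; each statement's English description precedes it below -/
import Mathlib

section
/- Let R(u,ũ) = a₀ + a₁u + a₂ũ + a₃uũ be a discrete Riccati map with coefficients depending on n ∈ ℤ. If v and w are two particular solutions (R(v(n),v(n+1)) = 0 and R(w(n),w(n+1)) = 0 for all n), and η satisfies the linear equation η(n+1) = -R(w(n),v(n+1))/R(v(n),w(n+1)) · η(n), then u defined by u = (v - ηw)/(1 - η) satisfies R(u(n),u(n+1)) = 0, provided all denominators are nonzero. -/
/-- Solving a discrete Riccati map from two particular solutions. -/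
theorem stmt_0 (a₀ a₁ a₂ a₃ : ℤ → ℂ) (v w η u : ℤ → ℂ)
    (R : ℤ → ℂ → ℂ → ℂ)
    (hR : ∀ n x y, R n x y = a₀ n + a₁ n * x + a₂ n * y + a₃ n * x * y)
    (hv : ∀ n, R n (v n) (v (n + 1)) = 0)
    (hw : ∀ n, R n (w n) (w (n + 1)) = 0)
    (hden : ∀ n, R n (v n) (w (n + 1)) ≠ 0)
    (hη : ∀ n, η (n + 1) = - R n (w n) (v (n + 1)) / R n (v n) (w (n + 1)) * η n)
    (hη1 : ∀ n, 1 - η n ≠ 0)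
    (hu : ∀ n, u n = (v n - η n * w n) / (1 - η n)) :
    ∀ n, R n (u n) (u (n + 1)) = 0 := by
  intro n
  have hA := hden n
  have h1 := hη1 n
  have h2 := hη1 (n + 1)
  have hvn := hv n
  have hwn := hw n
  have he := hη n
  simp only [hR] at hvn hwn hA ⊢
  have he2 : η (n + 1) * (a₀ n + a₁ n * v n + a₂ n * w (n + 1) + a₃ n * v n * w (n + 1)) =
      -(a₀ n + a₁ n * w n + a₂ n * v (n + 1) + a₃ n * w n * v (n + 1)) * η n := by
    rw [he, hR, hR]
    field_simp
  rw [hu n, hu (n + 1)]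
  field_simp
  apply mul_left_cancel₀ hA
  linear_combination (a₀ n + a₁ n * v n + a₂ n * w (n + 1) + a₃ n * v n * w (n + 1)) * hvn -
    (a₀ n + a₁ n * w n + a₂ n * v (n + 1) + a₃ n * w n * v (n + 1)) * η n ^ 2 * hwn +
    (-(a₀ n * (1 - η n)) - a₁ n * (v n - η n * w n) - a₂ n * (1 - η n) * w (n + 1) -
      a₃ n * (v n - η n * w n) * w (n + 1)) * he2
end

section
/- Let η₁, η₂ : ℤ² → ℂ and define shift operators T₁, T₂ by translation in each coordinate. Suppose for i ≠ j there are functions c_{ij}⁺, c_{ij}⁻ with T_j η_i = c_{ij}⁺ η_i and T_j⁻¹ η_i = c_{ij}⁻ η_i, where c_{ij}⁺ = S(u,T_i u,T_j u)/S(u,T_i⁻¹u,T_j u) and c_{ij}⁻ = S(u,T_i u,T_j⁻¹u)/S(u,T_i⁻¹u,T_j⁻¹u) for an antisymmetric-in-last-two-arguments function S satisfying S_{ij}(w,x,y) = -S_{ji}(w,y,x). Then (T_j⁻¹η_i)(T_iη_j) = (T_i⁻¹η_j)(T_jη_i). -/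
/-- The exchange property `(T_j⁻¹η_i)(T_iη_j) = (T_i⁻¹η_j)(T_jη_i)` for the
η-variables. -/
theorem stmt_4 (u η₁ η₂ : ℤ × ℤ → ℂ) (S₁₂ S₂₁ : ℂ → ℂ → ℂ → ℂ)
    (hanti : ∀ w x y, S₁₂ w x y = - S₂₁ w y x)
    (hd₁ : ∀ n m : ℤ, S₁₂ (u (n, m)) (u (n - 1, m)) (u (n, m + 1)) ≠ 0)
    (hd₂ : ∀ n m : ℤ, S₁₂ (u (n, m)) (u (n - 1, m)) (u (n, m - 1)) ≠ 0)
    (hd₃ : ∀ n m : ℤ, S₂₁ (u (n, m)) (u (n, m - 1)) (u (n + 1, m)) ≠ 0)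
    (hd₄ : ∀ n m : ℤ, S₂₁ (u (n, m)) (u (n, m - 1)) (u (n - 1, m)) ≠ 0)
    (h₁p : ∀ n m : ℤ, η₁ (n, m + 1)
      = S₁₂ (u (n, m)) (u (n + 1, m)) (u (n, m + 1))
        / S₁₂ (u (n, m)) (u (n - 1, m)) (u (n, m + 1)) * η₁ (n, m))
    (h₁m : ∀ n m : ℤ, η₁ (n, m - 1)
      = S₁₂ (u (n, m)) (u (n + 1, m)) (u (n, m - 1))
        / S₁₂ (u (n, m)) (u (n - 1, m)) (u (n, m - 1)) * η₁ (n, m))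
    (h₂p : ∀ n m : ℤ, η₂ (n + 1, m)
      = S₂₁ (u (n, m)) (u (n, m + 1)) (u (n + 1, m))
        / S₂₁ (u (n, m)) (u (n, m - 1)) (u (n + 1, m)) * η₂ (n, m))
    (h₂m : ∀ n m : ℤ, η₂ (n - 1, m)
      = S₂₁ (u (n, m)) (u (n, m + 1)) (u (n - 1, m))
        / S₂₁ (u (n, m)) (u (n, m - 1)) (u (n - 1, m)) * η₂ (n, m)) :
    ∀ n m : ℤ, η₁ (n, m - 1) * η₂ (n + 1, m) = η₂ (n - 1, m) * η₁ (n, m + 1) := by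
  intro n m
  rw [h₁m n m, h₂p n m, h₂m n m, h₁p n m]
  simp only [hanti]
  have d1 := hd₁ n m; have d2 := hd₂ n m; have d3 := hd₃ n m; have d4 := hd₄ n m
  rw [hanti] at d1 d2
  rw [neg_ne_zero] at d1 d2
  field_simp
end

section
/- The function ψ(n,m) = ((a+p)/(a-p))ⁿ((a+q)/(a-q))ᵐ satisfies the recurrences ψ(n+1,m) = ((a+p)/(a-p))ψ(n,m) and ψ(n,m+1) = ((a+q)/(a-q))ψ(n,m), and consequently u = Aψ + B/ψ with AB = (δ/4)² is a solution of the lattice equation (u+û)(ũ+ûũ)/(p²-a²) - (u+ũ)(û+ûũ)/(q²-a²) + δ²a⁴(p²-q²)/((p²-a²)²(q²-a²)²) = 0, where ũ = u(n+1,m), û = u(n,m+1), ûũ = u(n+1,m+1). -/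
lemma comb (X Y Z D1 D2 D3 : ℂ) (h1 : D1 ≠ 0) (h2 : D2 ≠ 0) (h3 : D3 ≠ 0)
    (h : X*(D2*D3) - Y*(D1*D3) + Z*(D1*D2) = 0) : X/D1 - Y/D2 + Z/D3 = 0 := by
  have : X/D1 - Y/D2 + Z/D3 = (X*(D2*D3) - Y*(D1*D3) + Z*(D1*D2))/(D1*D2*D3) := by
    field_simp
  rw [this, h, zero_div]

set_option maxHeartbeats 4000000 in
lemma core (a δ p q A B x : ℂ) (hap : a+p ≠ 0) (hmp : a-p ≠ 0) (haq : a+q ≠ 0) (hmq : a-q ≠ 0)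
    (hx : x ≠ 0) (hAB : A*B = (δ/4)^2) :
    (A*x + B/x + (A*((a+q)/(a-q)*x) + B/((a+q)/(a-q)*x))) *
      (A*((a+p)/(a-p)*x) + B/((a+p)/(a-p)*x) + (A*((a+p)/(a-p)*((a+q)/(a-q)*x)) + B/((a+p)/(a-p)*((a+q)/(a-q)*x)))) / (p^2-a^2)
    - (A*x + B/x + (A*((a+p)/(a-p)*x) + B/((a+p)/(a-p)*x))) *
      (A*((a+q)/(a-q)*x) + B/((a+q)/(a-q)*x) + (A*((a+p)/(a-p)*((a+q)/(a-q)*x)) + B/((a+p)/(a-p)*((a+q)/(a-q)*x)))) / (q^2-a^2)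
    + δ^2*a^4*(p^2-q^2)/((p^2-a^2)^2*(q^2-a^2)^2) = 0 := by
  have hd : δ^2 = 16*(A*B) := by linear_combination (-16:ℂ)*hAB
  have e1 : p^2-a^2 = -((a+p)*(a-p)) := by ring
  have e2 : q^2-a^2 = -((a+q)*(a-q)) := by ring
  have hD : (a+p)*(a-p)*(a+q)*(a-q)*x ≠ 0 :=
    mul_ne_zero (mul_ne_zero (mul_ne_zero (mul_ne_zero hap hmp) haq) hmq) hx
  have hDp : (a+p)*(a-p)*x ≠ 0 := mul_ne_zero (mul_ne_zero hap hmp) hx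
  have hDq : (a+q)*(a-q)*x ≠ 0 := mul_ne_zero (mul_ne_zero haq hmq) hx
  have hst : -((a+p)*(a-p)) ≠ 0 := neg_ne_zero.mpr (mul_ne_zero hap hmp)
  have hvw : -((a+q)*(a-q)) ≠ 0 := neg_ne_zero.mpr (mul_ne_zero haq hmq)
  have f00 : A*x + B/x = (A*x^2+B)/x := by field_simp
  have f10 : A*((a+p)/(a-p)*x) + B/((a+p)/(a-p)*x)
      = (A*(a+p)^2*x^2 + B*(a-p)^2)/((a+p)*(a-p)*x) := by field_simp
  have f01 : A*((a+q)/(a-q)*x) + B/((a+q)/(a-q)*x)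
      = (A*(a+q)^2*x^2 + B*(a-q)^2)/((a+q)*(a-q)*x) := by field_simp
  have f11 : A*((a+p)/(a-p)*((a+q)/(a-q)*x)) + B/((a+p)/(a-p)*((a+q)/(a-q)*x))
      = (A*(a+p)^2*(a+q)^2*x^2 + B*(a-p)^2*(a-q)^2)/((a+p)*(a-p)*(a+q)*(a-q)*x) := by
    have hy : (a+p)/(a-p)*((a+q)/(a-q)*x) = ((a+p)*(a+q)*x)/((a-p)*(a-q)) := by
      field_simp
    rw [hy, div_div_eq_mul_div, ← mul_div_assoc, div_add_div _ _ (mul_ne_zero hmp hmq)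
      (mul_ne_zero (mul_ne_zero hap haq) hx),
      div_eq_div_iff (mul_ne_zero (mul_ne_zero hmp hmq) (mul_ne_zero (mul_ne_zero hap haq) hx)) hD]
    ring
  rw [hd, e1, e2, f00, f10, f01, f11]
  rw [div_add_div _ _ hx hDq, div_add_div _ _ hDp hD, div_add_div _ _ hx hDp,
    div_add_div _ _ hDq hD, div_mul_div_comm, div_mul_div_comm, div_div, div_div]
  apply comb
  · exact mul_ne_zero (mul_ne_zero (mul_ne_zero hx hDq) (mul_ne_zero hDp hD)) hst
  · exact mul_ne_zero (mul_ne_zero (mul_ne_zero hx hDp) (mul_ne_zero hDq hD)) hvw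
  · exact mul_ne_zero (pow_ne_zero 2 hst) (pow_ne_zero 2 hvw)
  · ring

/-- The seed solution `u = Aψ + B/ψ` of the lattice equation A1. -/
theorem stmt_6 (a δ p q A B : ℂ) (ha : a ≠ 0) (hp : p ^ 2 ≠ a ^ 2) (hq : q ^ 2 ≠ a ^ 2)
    (hAB : A * B = (δ / 4) ^ 2)
    (ψ u : ℤ → ℤ → ℂ)
    (hψ : ∀ n m : ℤ, ψ n m = ((a + p) / (a - p)) ^ n * ((a + q) / (a - q)) ^ m)
    (hu : ∀ n m : ℤ, u n m = A * ψ n m + B / ψ n m) :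
    (∀ n m : ℤ, ψ (n + 1) m = (a + p) / (a - p) * ψ n m) ∧
    (∀ n m : ℤ, ψ n (m + 1) = (a + q) / (a - q) * ψ n m) ∧
    (∀ n m : ℤ,
      (u n m + u n (m + 1)) * (u (n + 1) m + u (n + 1) (m + 1)) / (p ^ 2 - a ^ 2)
      - (u n m + u (n + 1) m) * (u n (m + 1) + u (n + 1) (m + 1)) / (q ^ 2 - a ^ 2)
      + δ ^ 2 * a ^ 4 * (p ^ 2 - q ^ 2) / ((p ^ 2 - a ^ 2) ^ 2 * (q ^ 2 - a ^ 2) ^ 2) = 0) := by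
  have hap : a + p ≠ 0 := fun h => hp (by linear_combination (p - a) * h)
  have hmp : a - p ≠ 0 := fun h => hp (by linear_combination (-(a + p)) * h)
  have haq : a + q ≠ 0 := fun h => hq (by linear_combination (q - a) * h)
  have hmq : a - q ≠ 0 := fun h => hq (by linear_combination (-(a + q)) * h)
  have hα : (a + p) / (a - p) ≠ 0 := div_ne_zero hap hmp
  have hβ : (a + q) / (a - q) ≠ 0 := div_ne_zero haq hmq
  have h1 : ∀ n m : ℤ, ψ (n + 1) m = (a + p) / (a - p) * ψ n m := by
    intro n m
    rw [hψ, hψ, zpow_add_one₀ hα]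
    ring
  have h2 : ∀ n m : ℤ, ψ n (m + 1) = (a + q) / (a - q) * ψ n m := by
    intro n m
    rw [hψ, hψ, zpow_add_one₀ hβ]
    ring
  refine ⟨h1, h2, fun n m => ?_⟩
  have hx : ψ n m ≠ 0 := by
    rw [hψ]
    exact mul_ne_zero (zpow_ne_zero n hα) (zpow_ne_zero m hβ)
  have key := core a δ p q A B (ψ n m) hap hmp haq hmq hx hAB
  rw [hu n m, hu n (m + 1), hu (n + 1) m, hu (n + 1) (m + 1), h2 n m, h1 n m, h1 n (m + 1),
    h2 n m]
  exact key
end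

section
/- The set Γ(k) = {(x,X) ∈ ℂ² | X² = 1 + x⁴ - (k+1/k)x²}, with product (p,P)·(q,Q) = ((pQ+qP)/(1-p²q²), (Pp(q⁴-1) - Qq(p⁴-1))/((1-p²q²)(qP-pQ))), identity (0,1), and inverse (p,P)⁻¹ = (-p,P), is closed under the product: if (p,P),(q,Q) ∈ Γ(k) and the denominators 1-p²q² and qP-pQ are nonzero, then (p,P)·(q,Q) ∈ Γ(k). -/
/-- Membership of the Jacobi quartic curve `Γ(k)`. -/
def OnGamma (k : ℂ) (P : ℂ × ℂ) : Prop :=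
  P.2 ^ 2 = 1 + P.1 ^ 4 - (k + 1 / k) * P.1 ^ 2

/-!
On `X² = 1 - s x² + x⁴` the product has the polynomial-denominator form
`X₃ = ((P Q - s p q)(1 + p² q²) + 2 p q (p² + q²)) / (1 - p² q²)²` of the Jacobi quartic addition
law: multiplying the stated numerator by `1 - p² q²` gives `q P - p Q` times the new one.
In that form the curve equation for the product is a polynomial identity modulo the two curve
equations, which only enter through `(P Q)² = P² Q²` and `(p Q + q P)² = p² Q² + q² P² + 2 p q P Q`.
-/

def jacobiAddY {R : Type*} [CommRing R] (s p q P Q : R) : R :=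
  (P * Q - s * p * q) * (1 + p ^ 2 * q ^ 2) + 2 * p * q * (p ^ 2 + q ^ 2)

section JacobiQuartic

variable {R : Type*} [CommRing R] {s p q P Q : R}

theorem jacobiAddY_sq (hp : P ^ 2 = 1 + p ^ 4 - s * p ^ 2) (hq : Q ^ 2 = 1 + q ^ 4 - s * q ^ 2) :
    jacobiAddY s p q P Q ^ 2 = (1 - p ^ 2 * q ^ 2) ^ 4
      - s * (p * Q + q * P) ^ 2 * (1 - p ^ 2 * q ^ 2) ^ 2 + (p * Q + q * P) ^ 4 := by
  have hPQ : (P * Q) ^ 2 = (1 + p ^ 4 - s * p ^ 2) * (1 + q ^ 4 - s * q ^ 2) := by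
    rw [mul_pow, hp, hq]
  have hS : (p * Q + q * P) ^ 2 = p ^ 2 * (1 + q ^ 4 - s * q ^ 2) + q ^ 2 * (1 + p ^ 4 - s * p ^ 2)
      + 2 * p * q * (P * Q) := by
    linear_combination p ^ 2 * hq + q ^ 2 * hp
  rw [show (p * Q + q * P) ^ 4 = ((p * Q + q * P) ^ 2) ^ 2 by ring, hS, jacobiAddY]
  linear_combination (1 - p ^ 2 * q ^ 2) ^ 2 * hPQ

theorem mul_one_sub_eq_jacobiAddY (hp : P ^ 2 = 1 + p ^ 4 - s * p ^ 2)
    (hq : Q ^ 2 = 1 + q ^ 4 - s * q ^ 2) :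
    (P * p * (q ^ 4 - 1) - Q * q * (p ^ 4 - 1)) * (1 - p ^ 2 * q ^ 2)
      = (q * P - p * Q) * jacobiAddY s p q P Q := by
  unfold jacobiAddY
  linear_combination p * P * (1 + p ^ 2 * q ^ 2) * hq - q * Q * (1 + p ^ 2 * q ^ 2) * hp

end JacobiQuartic

theorem jacobiQuartic_mul_mem {K : Type*} [Field K] {s p q P Q : K}
    (hp : P ^ 2 = 1 + p ^ 4 - s * p ^ 2) (hq : Q ^ 2 = 1 + q ^ 4 - s * q ^ 2)
    (hd1 : 1 - p ^ 2 * q ^ 2 ≠ 0) (hd2 : q * P - p * Q ≠ 0) :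
    ((P * p * (q ^ 4 - 1) - Q * q * (p ^ 4 - 1)) / ((1 - p ^ 2 * q ^ 2) * (q * P - p * Q))) ^ 2
      = 1 + ((p * Q + q * P) / (1 - p ^ 2 * q ^ 2)) ^ 4
        - s * ((p * Q + q * P) / (1 - p ^ 2 * q ^ 2)) ^ 2 := by
  have hY : (P * p * (q ^ 4 - 1) - Q * q * (p ^ 4 - 1)) / ((1 - p ^ 2 * q ^ 2) * (q * P - p * Q))
      = jacobiAddY s p q P Q / (1 - p ^ 2 * q ^ 2) ^ 2 := by
    rw [div_eq_div_iff (mul_ne_zero hd1 hd2) (pow_ne_zero 2 hd1)]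
    linear_combination (1 - p ^ 2 * q ^ 2) * mul_one_sub_eq_jacobiAddY hp hq
  rw [hY, div_pow, jacobiAddY_sq hp hq]
  field_simp
  ring

theorem stmt_9_general (k : ℂ)
    (p P q Q : ℂ)
    (hp : OnGamma k (p, P)) (hq : OnGamma k (q, Q))
    (hd1 : 1 - p ^ 2 * q ^ 2 ≠ 0) (hd2 : q * P - p * Q ≠ 0) :
    OnGamma k ((p * Q + q * P) / (1 - p ^ 2 * q ^ 2),
      (P * p * (q ^ 4 - 1) - Q * q * (p ^ 4 - 1)) / ((1 - p ^ 2 * q ^ 2) * (q * P - p * Q))) :=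
  jacobiQuartic_mul_mem hp hq hd1 hd2

/-- The rational group product on the Jacobi quartic curve is closed. -/
theorem stmt_9 (k : ℂ) (hk0 : k ≠ 0) (hk1 : k ≠ 1) (hk2 : k ≠ -1)
    (p P q Q : ℂ)
    (hp : OnGamma k (p, P)) (hq : OnGamma k (q, Q))
    (hd1 : 1 - p ^ 2 * q ^ 2 ≠ 0) (hd2 : q * P - p * Q ≠ 0) :
    OnGamma k ((p * Q + q * P) / (1 - p ^ 2 * q ^ 2),
      (P * p * (q ^ 4 - 1) - Q * q * (p ^ 4 - 1)) / ((1 - p ^ 2 * q ^ 2) * (q * P - p * Q))) :=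
  stmt_9_general k p P q Q hp hq hd1 hd2
end

section
/- Let H and Θ be the Jacobi theta functions with modulus k, satisfying H(z+2K) = -H(z), H(-z) = -H(z), Θ(z+2K) = Θ(z), Θ(-z) = Θ(z), H(z+iK') = i·e^{-iπ(2z+iK')/(4K)}Θ(z), Θ(z+iK') = i·e^{-iπ(2z+iK')/(4K)}H(z), and the Weierstrass three-term identity H(x+y)H(x-y)H(z+w)H(z-w) + H(x+z)H(x-z)H(w+y)H(w-y) + H(x+w)H(x-w)H(y+z)H(y-z) = 0. Then for all a, b, c: Θ(c+a)Θ(c-b)H(c-a+b) - Θ(c-a)Θ(c+b)H(c+a-b) = H(2c)H(b-a)Θ(a)Θ(b)/H(c), provided H(c) ≠ 0. -/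
/-!
Put `y = (a + b)/2 + iK'` in the three-term identity with
`x = c + (a - b)/2`, `z = c + (b - a)/2`, `w = (b - a)/2`. In each term the two
factors containing `y` become `Θ`-values through the shift by `iK'`, and their exponential
multipliers have the same product in all three terms, because the two arguments sum to `a + b`.
Cancelling that common nonzero factor leaves the identity multiplied by `H c`.
-/

open Complex

theorem mul_exp_mul_exp_eq_of_add_eq (γ α β δ : ℂ) {u v u' v' : ℂ} (h : u + v = u' + v') :
    γ * exp (α * (2 * u + β) / δ) * (γ * exp (α * (2 * v + β) / δ))
      = γ * exp (α * (2 * u' + β) / δ) * (γ * exp (α * (2 * v' + β) / δ)) := by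
  rw [mul_mul_mul_comm, ← exp_add, ← add_div, mul_mul_mul_comm γ, ← exp_add, ← add_div]
  congr 3
  linear_combination 2 * α * h

theorem theta_identity_of_three_term {H Θ e : ℂ → ℂ} (τ : ℂ)
    (hHodd : ∀ z, H (-z) = -H z) (hΘeven : ∀ z, Θ (-z) = Θ z)
    (hshift : ∀ z, H (z + τ) = e z * Θ z)
    (he_mul : ∀ u v u' v', u + v = u' + v' → e u * e v = e u' * e v')
    (he_ne : ∀ z, e z ≠ 0)
    (h3 : ∀ x y z w : ℂ,
      H (x + y) * H (x - y) * H (z + w) * H (z - w)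
      + H (x + z) * H (x - z) * H (w + y) * H (w - y)
      + H (x + w) * H (x - w) * H (y + z) * H (y - z) = 0)
    (a b c : ℂ) :
    Θ (c + a) * Θ (c - b) * H (c - a + b) * H c - Θ (c - a) * Θ (c + b) * H (c + a - b) * H c
      = H (2 * c) * H (b - a) * Θ a * Θ b := by
  have key := h3 (c + (a - b) / 2) ((a + b) / 2 + τ) (c + (b - a) / 2) ((b - a) / 2)
  rw [show c + (a - b) / 2 + ((a + b) / 2 + τ) = c + a + τ by ring,
    show c + (a - b) / 2 - ((a + b) / 2 + τ) = -(-(c - b) + τ) by ring,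
    show c + (b - a) / 2 + (b - a) / 2 = c - a + b by ring,
    show c + (b - a) / 2 - (b - a) / 2 = c by ring,
    show c + (a - b) / 2 + (c + (b - a) / 2) = 2 * c by ring,
    show c + (a - b) / 2 - (c + (b - a) / 2) = -(b - a) by ring,
    show (b - a) / 2 + ((a + b) / 2 + τ) = b + τ by ring,
    show (b - a) / 2 - ((a + b) / 2 + τ) = -(a + τ) by ring,
    show c + (a - b) / 2 + (b - a) / 2 = c by ring,
    show c + (a - b) / 2 - (b - a) / 2 = c + a - b by ring,
    show (a + b) / 2 + τ + (c + (b - a) / 2) = c + b + τ by ring,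
    show (a + b) / 2 + τ - (c + (b - a) / 2) = -(c - a) + τ by ring] at key
  simp only [hHodd, hshift, hΘeven] at key
  have h1 := he_mul (c + a) (-(c - b)) a b (by ring)
  have h2 := he_mul (c + b) (-(c - a)) a b (by ring)
  have hfactor : e a * e b * (Θ (c + a) * Θ (c - b) * H (c - a + b) * H c
      - Θ (c - a) * Θ (c + b) * H (c + a - b) * H c - H (2 * c) * H (b - a) * Θ a * Θ b) = 0 := by
    linear_combination -key
      - (Θ (c + a) * Θ (c - b) * H (c - a + b) * H c) * h1
      + (Θ (c - a) * Θ (c + b) * H (c + a - b) * H c) * h2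
  exact sub_eq_zero.mp ((mul_eq_zero.mp hfactor).resolve_left (mul_ne_zero (he_ne a) (he_ne b)))

theorem stmt_13_general (H Θ : ℂ → ℂ) (K K' : ℂ)
    (hHodd : ∀ z, H (-z) = - H z)
    (hΘeven : ∀ z, Θ (-z) = Θ z)
    (hHiK : ∀ z, H (z + I * K')
      = I * Complex.exp (-(I * Real.pi) * (2 * z + I * K') / (4 * K)) * Θ z)
    (h3 : ∀ x y z w : ℂ,
      H (x + y) * H (x - y) * H (z + w) * H (z - w)
      + H (x + z) * H (x - z) * H (w + y) * H (w - y)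
      + H (x + w) * H (x - w) * H (y + z) * H (y - z) = 0) :
    ∀ a b c : ℂ, H c ≠ 0 →
      Θ (c + a) * Θ (c - b) * H (c - a + b) - Θ (c - a) * Θ (c + b) * H (c + a - b)
        = H (2 * c) * H (b - a) * Θ a * Θ b / H c := by
  intro a b c hc
  rw [eq_div_iff hc, sub_mul]
  exact theta_identity_of_three_term (I * K') hHodd hΘeven hHiK
    (fun u v u' v' h => mul_exp_mul_exp_eq_of_add_eq _ _ _ _ h)
    (fun _ => mul_ne_zero I_ne_zero (exp_ne_zero _)) h3 a b c

open Complex in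
/-- Derived theta-function identity (ti1) from the three-term identity and
quasi-periodicity. -/
theorem stmt_13 (H Θ : ℂ → ℂ) (K K' : ℂ)
    (hH2K : ∀ z, H (z + 2 * K) = - H z)
    (hHodd : ∀ z, H (-z) = - H z)
    (hΘ2K : ∀ z, Θ (z + 2 * K) = Θ z)
    (hΘeven : ∀ z, Θ (-z) = Θ z)
    (hHiK : ∀ z, H (z + I * K')
      = I * Complex.exp (-(I * Real.pi) * (2 * z + I * K') / (4 * K)) * Θ z)
    (hΘiK : ∀ z, Θ (z + I * K')
      = I * Complex.exp (-(I * Real.pi) * (2 * z + I * K') / (4 * K)) * H z)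
    (h3 : ∀ x y z w : ℂ,
      H (x + y) * H (x - y) * H (z + w) * H (z - w)
      + H (x + z) * H (x - z) * H (w + y) * H (w - y)
      + H (x + w) * H (x - w) * H (y + z) * H (y - z) = 0) :
    ∀ a b c : ℂ, H c ≠ 0 →
      Θ (c + a) * Θ (c - b) * H (c - a + b) - Θ (c - a) * Θ (c + b) * H (c + a - b)
        = H (2 * c) * H (b - a) * Θ a * Θ b / H c :=
  stmt_13_general H Θ K K' hHodd hΘeven hHiK h3
end

section
/- Under the same hypotheses on H and Θ (quasi-periodicity and three-term identity), for all a, b, c with Θ(c) ≠ 0: Θ(c+a)Θ(c-b)Θ(c-a+b) - Θ(c-a)Θ(c+b)Θ(c+a-b) = H(2c)H(b-a)H(a)H(b)/Θ(c). -/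
open Complex in
/-- Derived theta-function identity (ti2) from the three-term identity and
quasi-periodicity. -/
theorem stmt_14 (H Θ : ℂ → ℂ) (K K' : ℂ)
    (hHodd : ∀ z, H (-z) = - H z)
    (hΘeven : ∀ z, Θ (-z) = Θ z)
    (hHiK : ∀ z, H (z + I * K')
      = I * Complex.exp (-(I * Real.pi) * (2 * z + I * K') / (4 * K)) * Θ z)
    (hΘiK : ∀ z, Θ (z + I * K')
      = I * Complex.exp (-(I * Real.pi) * (2 * z + I * K') / (4 * K)) * H z)
    (h3 : ∀ x y z w : ℂ,
      H (x + y) * H (x - y) * H (z + w) * H (z - w)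
      + H (x + z) * H (x - z) * H (w + y) * H (w - y)
      + H (x + w) * H (x - w) * H (y + z) * H (y - z) = 0) :
    ∀ a b c : ℂ, Θ c ≠ 0 →
      Θ (c + a) * Θ (c - b) * Θ (c - a + b) - Θ (c - a) * Θ (c + b) * Θ (c + a - b)
        = H (2 * c) * H (b - a) * H a * H b / Θ c := by
  intro a b c hc
  have key := h3 (c + (a-b)/2 + I*K') ((a+b)/2) (c + (b-a)/2 + I*K') ((b-a)/2)
  rw [show c + (a-b)/2 + I*K' + (a+b)/2 = (c+a) + I*K' from by ring,
      show c + (a-b)/2 + I*K' - (a+b)/2 = (c-b) + I*K' from by ring,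
      show c + (b-a)/2 + I*K' + (b-a)/2 = (c-a+b) + I*K' from by ring,
      show c + (b-a)/2 + I*K' - (b-a)/2 = c + I*K' from by ring,
      show c + (a-b)/2 + I*K' + (c + (b-a)/2 + I*K') = (2*c + I*K') + I*K' from by ring,
      show c + (a-b)/2 + I*K' - (c + (b-a)/2 + I*K') = -(b-a) from by ring,
      show (b-a)/2 + (a+b)/2 = b from by ring,
      show (b-a)/2 - (a+b)/2 = -a from by ring,
      show c + (a-b)/2 + I*K' + (b-a)/2 = c + I*K' from by ring,
      show c + (a-b)/2 + I*K' - (b-a)/2 = (c+a-b) + I*K' from by ring,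
      show (a+b)/2 + (c + (b-a)/2 + I*K') = (c+b) + I*K' from by ring,
      show (a+b)/2 - (c + (b-a)/2 + I*K') = -((c-a) + I*K') from by ring] at key
  simp only [hHodd, hHiK, hΘiK] at key
  have hF : Complex.exp (-(I * Real.pi) * (8*c + 4*(I*K')) / (4*K)) ≠ 0 :=
    Complex.exp_ne_zero _
  have hbr : Θ (c+a) * Θ (c-b) * Θ (c-a+b) * Θ c
      - H (2*c) * H (b-a) * H b * H a
      - Θ c * Θ (c+a-b) * Θ (c+b) * Θ (c-a) = 0 := by
    refine mul_left_cancel₀ hF ?_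
    rw [mul_zero]
    have hP1 : Complex.exp (-(I * Real.pi) * (2*(c+a) + I*K') / (4*K))
        * Complex.exp (-(I * Real.pi) * (2*(c-b) + I*K') / (4*K))
        * Complex.exp (-(I * Real.pi) * (2*(c-a+b) + I*K') / (4*K))
        * Complex.exp (-(I * Real.pi) * (2*c + I*K') / (4*K))
        = Complex.exp (-(I * Real.pi) * (8*c + 4*(I*K')) / (4*K)) := by
      rw [← Complex.exp_add, ← Complex.exp_add, ← Complex.exp_add]; congr 1; ring
    have hP2 : Complex.exp (-(I * Real.pi) * (2*(2*c + I*K') + I*K') / (4*K))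
        * Complex.exp (-(I * Real.pi) * (2*(2*c) + I*K') / (4*K))
        = Complex.exp (-(I * Real.pi) * (8*c + 4*(I*K')) / (4*K)) := by
      rw [← Complex.exp_add]; congr 1; ring
    have hP3 : Complex.exp (-(I * Real.pi) * (2*c + I*K') / (4*K))
        * Complex.exp (-(I * Real.pi) * (2*(c+a-b) + I*K') / (4*K))
        * Complex.exp (-(I * Real.pi) * (2*(c+b) + I*K') / (4*K))
        * Complex.exp (-(I * Real.pi) * (2*(c-a) + I*K') / (4*K))
        = Complex.exp (-(I * Real.pi) * (8*c + 4*(I*K')) / (4*K)) := by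
      rw [← Complex.exp_add, ← Complex.exp_add, ← Complex.exp_add]; congr 1; ring
    have hI4 : (I:ℂ)^4 = 1 := by
      rw [show (4:ℕ) = 2*2 from rfl, pow_mul, Complex.I_sq]; norm_num
    have hI2 : (I:ℂ)^2 = -1 := Complex.I_sq
    linear_combination key
      - I^4 * (Θ (c+a) * Θ (c-b) * Θ (c-a+b) * Θ c) * hP1
      - I^2 * (H (2*c) * H (b-a) * H b * H a) * hP2
      + I^4 * (Θ c * Θ (c+a-b) * Θ (c+b) * Θ (c-a)) * hP3
      - Complex.exp (-(I * Real.pi) * (8*c + 4*(I*K')) / (4*K)) * (Θ (c+a) * Θ (c-b) * Θ (c-a+b) * Θ c) * hI4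
      - Complex.exp (-(I * Real.pi) * (8*c + 4*(I*K')) / (4*K)) * (H (2*c) * H (b-a) * H b * H a) * hI2
      + Complex.exp (-(I * Real.pi) * (8*c + 4*(I*K')) / (4*K)) * (Θ c * Θ (c+a-b) * Θ (c+b) * Θ (c-a)) * hI4
  rw [eq_div_iff hc]
  linear_combination hbr
end

section
/- Define X : (functions on lattice) → (functions) by X = A'ψ·T_a⁻² + (B'/ψ)·T_a², where T_a is a shift with T_aφ_i = ((a-l_i)/(a+l_i))φ_i, T_iψ = ((a+l_i)/(a-l_i))ψ, and B_i = 1 - φ_i T_i². Then ψ·(T_a⁻²φ_i) = φ_i·(T_i²ψ) and (1/ψ)·(T_a²φ_i) = φ_i·(1/(T_i²ψ)), and consequently B_i X = X B_i for each i ∈ {1,…,N}. -/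
/-- The operator `X = A'ψ T_a⁻² + (B'/ψ) T_a²` commutes with each
`B_i = 1 - φ_i T_i²`. -/
theorem stmt_16 (N : ℕ) (a A' B' : ℂ) (l : Fin N → ℂ)
    (hl1 : ∀ i, a + l i ≠ 0) (hl2 : ∀ i, a - l i ≠ 0)
    (ψ : (Fin N → ℤ) → ℂ) (φ : Fin N → ℤ → (Fin N → ℤ) → ℂ)
    (hψ0 : ∀ s, ψ s ≠ 0)
    (hψi : ∀ i s, ψ (Function.update s i (s i + 1)) = (a + l i) / (a - l i) * ψ s)
    (hφa : ∀ i (t : ℤ) s, φ i (t + 1) s = (a - l i) / (a + l i) * φ i t s)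
    (X : (ℤ → (Fin N → ℤ) → ℂ) → ℤ → (Fin N → ℤ) → ℂ)
    (hX : ∀ g (t : ℤ) s, X g t s = A' * ψ s * g (t - 2) s + B' / ψ s * g (t + 2) s)
    (B : Fin N → (ℤ → (Fin N → ℤ) → ℂ) → ℤ → (Fin N → ℤ) → ℂ)
    (hB : ∀ i g (t : ℤ) s,
      B i g t s = g t s - φ i t s * g t (Function.update s i (s i + 2))) :
    (∀ i (t : ℤ) s,
      ψ s * φ i (t - 2) s = φ i t s * ψ (Function.update s i (s i + 2))) ∧
    (∀ i (t : ℤ) s,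
      (1 / ψ s) * φ i (t + 2) s = φ i t s * (1 / ψ (Function.update s i (s i + 2)))) ∧
    (∀ i g (t : ℤ) s, B i (X g) t s = X (B i g) t s) := by
  have key1 : ∀ i s, ψ (Function.update s i (s i + 2))
      = ((a + l i) / (a - l i))^2 * ψ s := by
    intro i s
    have h1 : Function.update s i (s i + 2)
        = Function.update (Function.update s i (s i + 1)) i
            ((Function.update s i (s i + 1)) i + 1) := by
      simp [Function.update_idem, Function.update_self]
      ring_nf
    rw [h1, hψi, hψi]
    ring
  have key2 : ∀ i (t : ℤ) s, φ i t s = ((a - l i) / (a + l i))^2 * φ i (t - 2) s := by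
    intro i t s
    have h1 := hφa i (t - 2) s
    have h2 := hφa i (t - 1) s
    have e1 : t - 2 + 1 = t - 1 := by ring
    have e2 : t - 1 + 1 = t := by ring
    rw [e1] at h1
    rw [e2] at h2
    rw [h2, h1]; ring
  have hck : ∀ i, (a - l i) / (a + l i) * ((a + l i) / (a - l i)) = 1 := by
    intro i
    rw [div_mul_div_comm, mul_comm, div_self (mul_ne_zero (hl1 i) (hl2 i))]
  have p1 : ∀ i (t : ℤ) s,
      ψ s * φ i (t - 2) s = φ i t s * ψ (Function.update s i (s i + 2)) := by
    intro i t s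
    rw [key1, key2 i t s]
    field_simp [hl1 i, hl2 i, hψ0 s]
  have p2 : ∀ i (t : ℤ) s,
      (1 / ψ s) * φ i (t + 2) s = φ i t s * (1 / ψ (Function.update s i (s i + 2))) := by
    intro i t s
    have h := key2 i (t + 2) s
    have e : t + 2 - 2 = t := by ring
    rw [e] at h
    rw [h, key1]
    field_simp [hl1 i, hl2 i, hψ0 s]
  refine ⟨p1, p2, ?_⟩
  intro i g t s
  rw [hB, hX, hX, hX, hB, hB]
  have h1 := p1 i t s
  have h2 := p2 i t s
  have hψ := hψ0 s
  have hψ' := hψ0 (Function.update s i (s i + 2))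
  linear_combination (A' * g (t - 2) (Function.update s i (s i + 2))) * h1 +
    (B' * g (t + 2) (Function.update s i (s i + 2))) * h2
end

section
/- Let v and functions η₁,…,η_N satisfy the recurrence η_{1…ij} = ((1 - T_jη_{1…i})/(1 - T_j⁻¹η_{1…i}))·T_i⁻¹η_{1…(i-1)j} together with the exchange property (T_j⁻¹η_i)(T_iη_j) = (T_i⁻¹η_j)(T_jη_i). Define operators A_i = ∏_{j=i}^{1} [T_j⁻¹ - ((∏_{k=1}^{j-1}T_k⁻¹)η_j)·T_j] (product taken in decreasing order of j). Then for N = 2 the closed form η_{12j} = (T_j A_2 1)/(T_j⁻¹ A_2 1) · T_1⁻¹T_2⁻¹η_j solves the recurrence, i.e. η_{12j} = ((1 - T_jη_{12})/(1 - T_j⁻¹η_{12}))·T_2⁻¹η_{1j} with η_{1j} = (T_j A_1 1)/(T_j⁻¹ A_1 1)·T_1⁻¹η_j and η_{12} computed from the same formula with j = 2. -/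
/-- Closed-form solution of the η-recurrence for two B\"acklund steps. -/
theorem stmt_17 (N : ℕ) (η : Fin N → (Fin N → ℤ) → ℂ)
    (sh : Fin N → ℤ → (Fin N → ℤ) → Fin N → ℤ)
    (hsh : ∀ i d x, sh i d x = Function.update x i (x i + d))
    (hexch : ∀ i j x,
      η i (sh j (-1) x) * η j (sh i 1 x) = η j (sh i (-1) x) * η i (sh j 1 x))
    (i₁ i₂ j : Fin N)
    (A₁ A₂ : ((Fin N → ℤ) → ℂ) → (Fin N → ℤ) → ℂ)
    (hA₁ : ∀ g x, A₁ g x = g (sh i₁ (-1) x) - η i₁ x * g (sh i₁ 1 x))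
    (hA₂ : ∀ g x, A₂ g x
      = A₁ g (sh i₂ (-1) x) - η i₂ (sh i₁ (-1) x) * A₁ g (sh i₂ 1 x))
    (η1j η12 η12j : (Fin N → ℤ) → ℂ)
    (hη1j : ∀ x, η1j x
      = A₁ (fun _ => 1) (sh j 1 x) / A₁ (fun _ => 1) (sh j (-1) x)
        * η j (sh i₁ (-1) x))
    (hη12 : ∀ x, η12 x
      = A₁ (fun _ => 1) (sh i₂ 1 x) / A₁ (fun _ => 1) (sh i₂ (-1) x)
        * η i₂ (sh i₁ (-1) x))
    (hη12j : ∀ x, η12j x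
      = A₂ (fun _ => 1) (sh j 1 x) / A₂ (fun _ => 1) (sh j (-1) x)
        * η j (sh i₁ (-1) (sh i₂ (-1) x)))
    (hnz₁ : ∀ x, A₁ (fun _ => 1) x ≠ 0)
    (hnz₂ : ∀ x, A₂ (fun _ => 1) x ≠ 0)
    (hnz₃ : ∀ x, 1 - η12 (sh j (-1) x) ≠ 0) :
    ∀ x, η12j x
      = (1 - η12 (sh j 1 x)) / (1 - η12 (sh j (-1) x)) * η1j (sh i₂ (-1) x) := by
  intro x
  have hcomm : ∀ (i k : Fin N) (d e : ℤ) (y : Fin N → ℤ),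
      sh i d (sh k e y) = sh k e (sh i d y) := by
    intro i k d e y
    rcases eq_or_ne i k with rfl | hik
    · simp only [hsh, Function.update_self, Function.update_idem]
      congr 1
      ring
    · simp only [hsh]
      rw [Function.update_of_ne hik, Function.update_of_ne (Ne.symm hik),
        Function.update_comm hik]
  have h12 : ∀ y, 1 - η12 y
      = A₂ (fun _ => 1) y / A₁ (fun _ => 1) (sh i₂ (-1) y) := by
    intro y
    rw [hη12, hA₂]
    have := hnz₁ (sh i₂ (-1) y)
    field_simp
  rw [hη12j x, h12 (sh j 1 x), h12 (sh j (-1) x), hη1j,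
    hcomm i₂ j (-1) 1 x, hcomm i₂ j (-1) (-1) x]
  have nb := hnz₂ (sh j (-1) x)
  have na1 := hnz₁ (sh j 1 (sh i₂ (-1) x))
  have na2 := hnz₁ (sh j (-1) (sh i₂ (-1) x))
  field_simp
end

section
/- Given a function u on ℤᴺ and functions η₁,…,η_N with the exchange property, the solution of the recurrence u_{1…i} = ([T_i⁻¹ - η_{1…i}T_i]u_{1…(i-1)})/(1 - η_{1…i}) with η_{1…i} defined via the operators A_i as η_{1…i} = (T_i A_{i-1}1)/(T_i⁻¹A_{i-1}1)·(∏_{k=1}^{i-1}T_k⁻¹)η_i, is given in closed form by u_{1…i} = (A_i u)/(A_i 1), where A_i = ∏_{j=i}^{1}[T_j⁻¹ - ((∏_{k=1}^{j-1}T_k⁻¹)η_j)T_j]. Verify this for i = 1 and i = 2: u_1 = (A_1 u)/(A_1 1) and u_{12} = (A_2 u)/(A_2 1). -/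
/-- Closed form `u_{1…i} = A_i u / A_i 1` of the B\"acklund iteration, verified
for `i = 1` and `i = 2`. -/
theorem stmt_18 (N : ℕ) (u : (Fin N → ℤ) → ℂ) (η : Fin N → (Fin N → ℤ) → ℂ)
    (sh : Fin N → ℤ → (Fin N → ℤ) → Fin N → ℤ)
    (hsh : ∀ i d x, sh i d x = Function.update x i (x i + d))
    (hexch : ∀ i j x,
      η i (sh j (-1) x) * η j (sh i 1 x) = η j (sh i (-1) x) * η i (sh j 1 x))
    (i₁ i₂ : Fin N)
    (A₁ A₂ : ((Fin N → ℤ) → ℂ) → (Fin N → ℤ) → ℂ)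
    (hA₁ : ∀ g x, A₁ g x = g (sh i₁ (-1) x) - η i₁ x * g (sh i₁ 1 x))
    (hA₂ : ∀ g x, A₂ g x
      = A₁ g (sh i₂ (-1) x) - η i₂ (sh i₁ (-1) x) * A₁ g (sh i₂ 1 x))
    (η₁ η12 u₁ u12 : (Fin N → ℤ) → ℂ)
    (hη₁ : ∀ x, η₁ x = η i₁ x)
    (hη12 : ∀ x, η12 x
      = A₁ (fun _ => 1) (sh i₂ 1 x) / A₁ (fun _ => 1) (sh i₂ (-1) x)
        * η i₂ (sh i₁ (-1) x))
    (hu₁ : ∀ x, u₁ x = A₁ u x / A₁ (fun _ => 1) x)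
    (hu12 : ∀ x, u12 x = A₂ u x / A₂ (fun _ => 1) x)
    (hnz₁ : ∀ x, A₁ (fun _ => 1) x ≠ 0)
    (hnz₂ : ∀ x, A₂ (fun _ => 1) x ≠ 0)
    (hnzη : ∀ x, 1 - η12 x ≠ 0) :
    (∀ x, u₁ x = (u (sh i₁ (-1) x) - η₁ x * u (sh i₁ 1 x)) / (1 - η₁ x)) ∧
    (∀ x, u12 x = (u₁ (sh i₂ (-1) x) - η12 x * u₁ (sh i₂ 1 x)) / (1 - η12 x)) := by
  constructor
  · intro x
    have h1 : A₁ (fun _ => 1) x = 1 - η i₁ x := by rw [hA₁]; ring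
    rw [hu₁, hA₁, hη₁, h1]
  · intro x
    have hb := hnz₁ (sh i₂ (-1) x)
    have hd := hnz₁ (sh i₂ 1 x)
    have h2 := hnz₂ x
    have hη := hnzη x
    rw [hA₂] at h2
    rw [hη12] at hη ⊢
    rw [hu12, hA₂, hA₂, hu₁, hu₁]
    rw [div_eq_div_iff h2 hη]
    field_simp
end
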